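/- arXiv:1710.02434 — 3 statements merged into one kernel-verified Lean document; each statement's English description precedes it below -/
import Mathlib

section
/- Define g(α,δ) = ½( α_1δ_2(1−α_1−δ_2) + α_2δ_1(1−α_2−δ_1) + (α_1δ_2 − α_2δ_1)² ) for α = (α_1,α_2), δ = (δ_1,δ_2) ∈ ℝ². Then for any k ≥ 4 and any points α_1,…,α_k, δ_1,…,δ_k ∈ ℝ², the k×k determinant G_k = det( g(α_i, δ_j) )_{1 ≤ i,j ≤ k} vanishes identically. In particular, for n = 2 the cuspidal form P_A(t), being represented by a matrix with entries g(α_k,α_j), has rank at most 3 regardless of the codimension m. -/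
/-- The symmetric kernel `g(α,δ)` of the bivariate cuspidal form. -/
noncomputable def gKer (a d : ℝ × ℝ) : ℝ :=
  (a.1 * d.2 * (1 - a.1 - d.2) + a.2 * d.1 * (1 - a.2 - d.1)
    + (a.1 * d.2 - a.2 * d.1) ^ 2) / 2

/-- Left factor of the rank-3 factorization of `gKer`. -/
noncomputable def gL (a : ℝ × ℝ) : Fin 3 → ℝ :=
  ![(a.1 - a.1 ^ 2) / 2, (a.2 - a.2 ^ 2) / 2, -(a.1 * a.2)]

/-- Right factor of the rank-3 factorization of `gKer`. -/
noncomputable def gR (d : ℝ × ℝ) : Fin 3 → ℝ :=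
  ![d.2 - d.2 ^ 2, d.1 - d.1 ^ 2, d.1 * d.2]

lemma gKer_factor (a d : ℝ × ℝ) :
    gKer a d = ∑ i : Fin 3, gL a i * gR d i := by
  simp [gKer, gL, gR, Fin.sum_univ_three]
  ring

lemma gKer_matrix_eq (k : ℕ) (a d : Fin k → ℝ × ℝ) :
    (Matrix.of fun i j => gKer (a i) (d j)) =
      (Matrix.of fun i j => gL (a i) j) * (Matrix.of fun i j => gR (d j) i) := by
  ext i j
  simp [Matrix.mul_apply, gKer_factor]

lemma gKer_rank_le (k : ℕ) (a d : Fin k → ℝ × ℝ) :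
    (Matrix.of fun i j => gKer (a i) (d j)).rank ≤ 3 := by
  rw [gKer_matrix_eq]
  calc ((Matrix.of fun i j => gL (a i) j) * (Matrix.of fun i j => gR (d j) i)).rank
      ≤ (Matrix.of fun (i : Fin k) (j : Fin 3) => gL (a i) j).rank :=
        Matrix.rank_mul_le_left _ _
    _ ≤ Fintype.card (Fin 3) := Matrix.rank_le_card_width _
    _ = 3 := by simp

/-- **Vanishing of the `k × k` determinants `G_k` for `k ≥ 4`.**
For any `k ≥ 4` and any points `α_1,…,α_k, δ_1,…,δ_k ∈ ℝ²`, the determinant of the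
`k × k` matrix with entries `g(α_i, δ_j)` vanishes.  In particular, for `n = 2` any
matrix with entries `g(α_k, α_j)` — such as a matrix representing the bivariate
cuspidal form `P_A` — has rank at most `3`, regardless of the codimension `m`. -/
theorem gram_det_vanishes_and_rank_le_three :
    (∀ k : ℕ, 4 ≤ k → ∀ (a d : Fin k → ℝ × ℝ),
      (Matrix.of fun i j => gKer (a i) (d j)).det = 0) ∧
    (∀ (m : ℕ) (α : Fin m → ℝ × ℝ),
      (Matrix.of fun k j => gKer (α k) (α j)).rank ≤ 3) := by
  constructor
  · intro k hk a d
    by_contra h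
    have hu : IsUnit (Matrix.of fun i j => gKer (a i) (d j)) := by
      rw [Matrix.isUnit_iff_isUnit_det]
      exact isUnit_iff_ne_zero.mpr h
    have := Matrix.rank_of_isUnit _ hu
    have h3 := gKer_rank_le k a d
    rw [this] at h3
    simp only [Fintype.card_fin] at h3
    omega
  · intro m α
    exact gKer_rank_le m α α
end

section
/- Define g(α,δ) = ½( α_1δ_2(1−α_1−δ_2) + α_2δ_1(1−α_2−δ_1) + (α_1δ_2 − α_2δ_1)² ) for α,δ ∈ ℝ², and for α,δ,ε ∈ ℝ² define H(α,δ,ε) = α_1α_2δ_2ε_1(1−δ_2)(1−ε_1) − α_1α_2δ_1ε_2(1−δ_1)(1−ε_2) + α_2δ_1ε_1ε_2(1−α_2)(1−δ_1) − α_2δ_1δ_2ε_1(1−α_2)(1−ε_1) − α_1δ_2ε_1ε_2(1−α_1)(1−δ_2) + α_1δ_1δ_2ε_2(1−α_1)(1−ε_2). Then for all α_1,α_2,α_3,δ_1,δ_2,δ_3 ∈ ℝ², the 3×3 determinant factors as det( g(α_i,δ_j) )_{1 ≤ i,j ≤ 3} = ¼·H(α_1,α_2,α_3)·H(δ_1,δ_2,δ_3).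 -/
/-- The `24`-term polynomial `H` in three points of `ℝ²`. -/
noncomputable def HPoly (a d e : ℝ × ℝ) : ℝ :=
  a.1 * a.2 * d.2 * e.1 * (1 - d.2) * (1 - e.1)
    - a.1 * a.2 * d.1 * e.2 * (1 - d.1) * (1 - e.2)
    + a.2 * d.1 * e.1 * e.2 * (1 - a.2) * (1 - d.1)
    - a.2 * d.1 * d.2 * e.1 * (1 - a.2) * (1 - e.1)
    - a.1 * d.2 * e.1 * e.2 * (1 - a.1) * (1 - d.2)
    + a.1 * d.1 * d.2 * e.2 * (1 - a.1) * (1 - e.2)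

/-- **Factorization of the `3 × 3` determinant `G₃`.**
For all `α_1,α_2,α_3,δ_1,δ_2,δ_3 ∈ ℝ²`,
`det(g(α_i,δ_j))_{1≤i,j≤3} = ¼ · H(α_1,α_2,α_3) · H(δ_1,δ_2,δ_3)`. -/
theorem g3_det_factorization (a₁ a₂ a₃ d₁ d₂ d₃ : ℝ × ℝ) :
    (Matrix.of fun i j => gKer (![a₁, a₂, a₃] i) (![d₁, d₂, d₃] j)).det =
      (1 / 4) * HPoly a₁ a₂ a₃ * HPoly d₁ d₂ d₃ := by
  rw [Matrix.det_fin_three]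
  simp only [Matrix.of_apply, Matrix.cons_val', Matrix.cons_val_zero, Matrix.cons_val_one,
    Matrix.head_cons, Matrix.empty_val', Matrix.cons_val_fin_one, Matrix.head_fin_const,
    Matrix.cons_val_two, Matrix.tail_cons, gKer, HPoly]
  ring
end

section
/- Let 0, e_1 = (1,0), e_2 = (0,1), α = (α_1,α_2), δ = (δ_1,δ_2) be five distinct points of ℝ². Then the 2×2 determinant G_2 = g(α,α)·g(δ,δ) − g(α,δ)·g(δ,α) vanishes if and only if there is a parabola containing all five points, i.e., if and only if there exists (a,b) ∈ ℂ² ∖ {(0,0)} such that the polynomial P(x) = a²x_1² + 2abx_1x_2 + b²x_2² − a²x_1 − b²x_2 vanishes at α and at δ (it automatically vanishes at 0, e_1, e_2). -/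
/-- Two binary quadratic forms over `ℂ` have a common nontrivial zero iff their
resultant vanishes. -/
lemma quad_common_root_iff (A1 B1 C1 A2 B2 C2 : ℂ) :
    (A1 * C2 - A2 * C1) ^ 2 - (A1 * B2 - A2 * B1) * (B1 * C2 - B2 * C1) = 0 ↔
    ∃ a b : ℂ, (a, b) ≠ (0, 0) ∧ A1 * a ^ 2 + B1 * (a * b) + C1 * b ^ 2 = 0 ∧
      A2 * a ^ 2 + B2 * (a * b) + C2 * b ^ 2 = 0 := by
  constructor
  · intro h
    by_cases hA1 : A1 = 0
    · by_cases hA2 : A2 = 0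
      · exact ⟨1, 0, by simp, by simp [hA1], by simp [hA2]⟩
      · by_cases hBC : B1 = 0 ∧ C1 = 0
        · obtain ⟨s, hs⟩ := IsAlgClosed.exists_pow_nat_eq (B2 ^ 2 - 4 * A2 * C2)
            (n := 2) (by norm_num)
          refine ⟨-B2 + s, 2 * A2, ?_, ?_, ?_⟩
          · intro he
            rw [Prod.mk.injEq] at he
            exact hA2 (by have := he.2; linear_combination this / 2)
          · rw [hA1, hBC.1, hBC.2]; ring
          · linear_combination A2 * hs
        · refine ⟨C1, -B1, ?_, ?_, ?_⟩
          · intro he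
            rw [Prod.mk.injEq] at he
            exact hBC ⟨neg_eq_zero.mp he.2, he.1⟩
          · linear_combination C1 ^ 2 * hA1
          · have h2 : A2 * (A2 * C1 ^ 2 + B2 * (C1 * -B1) + C2 * (-B1) ^ 2) = 0 := by
              linear_combination h - (C1 * B2 ^ 2 - 2 * C1 * A2 * C2 - B1 * B2 * C2
                + A1 * C2 ^ 2) * hA1
            exact (mul_eq_zero.mp h2).resolve_left hA2
    · obtain ⟨s, hs⟩ := IsAlgClosed.exists_pow_nat_eq (B1 ^ 2 - 4 * A1 * C1)
        (n := 2) (by norm_num)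
      have hb : (2 * A1 : ℂ) ≠ 0 := by
        intro he; exact hA1 (by linear_combination he / 2)
      have hprod : (A2 * (-B1 + s) ^ 2 + B2 * ((-B1 + s) * (2 * A1)) + C2 * (2 * A1) ^ 2) *
            (A2 * (-B1 - s) ^ 2 + B2 * ((-B1 - s) * (2 * A1)) + C2 * (2 * A1) ^ 2)
          = 16 * A1 ^ 2 *
            ((A1 * C2 - A2 * C1) ^ 2 - (A1 * B2 - A2 * B1) * (B1 * C2 - B2 * C1)) := by
        linear_combination (A2 ^ 2 * s ^ 2 - B1 ^ 2 * A2 ^ 2 - 4 * A1 * C1 * A2 ^ 2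
          + 4 * A1 * B1 * A2 * B2 - 4 * A1 ^ 2 * B2 ^ 2 + 8 * A1 ^ 2 * A2 * C2) * hs
      rw [h, mul_zero] at hprod
      rcases mul_eq_zero.mp hprod with h2 | h2
      · refine ⟨-B1 + s, 2 * A1, ?_, ?_, ?_⟩
        · intro he; rw [Prod.mk.injEq] at he; exact hb he.2
        · linear_combination A1 * hs
        · linear_combination h2
      · refine ⟨-B1 - s, 2 * A1, ?_, ?_, ?_⟩
        · intro he; rw [Prod.mk.injEq] at he; exact hb he.2
        · linear_combination A1 * hs
        · linear_combination h2
  · rintro ⟨a, b, hab, h1, h2⟩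
    by_contra hR
    have ha3 : ((A1 * C2 - A2 * C1) ^ 2 - (A1 * B2 - A2 * B1) * (B1 * C2 - B2 * C1))
        * a ^ 3 = 0 := by
      linear_combination ((C1 * B2 ^ 2 - C1 * A2 * C2 - B1 * B2 * C2 + A1 * C2 ^ 2) * a
          + (C1 * B2 * C2 - B1 * C2 ^ 2) * b) * h1
        + ((C1 ^ 2 * A2 - B1 * C1 * B2 + B1 ^ 2 * C2 - A1 * C1 * C2) * a
          + (-C1 ^ 2 * B2 + B1 * C1 * C2) * b) * h2
    have hb3 : ((A1 * C2 - A2 * C1) ^ 2 - (A1 * B2 - A2 * B1) * (B1 * C2 - B2 * C1))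
        * b ^ 3 = 0 := by
      linear_combination ((-B1 * A2 ^ 2 + A1 * A2 * B2) * a
          + (C1 * A2 ^ 2 - B1 * A2 * B2 + A1 * B2 ^ 2 - A1 * A2 * C2) * b) * h1
        + ((A1 * B1 * A2 - A1 ^ 2 * B2) * a
          + (B1 ^ 2 * A2 - A1 * C1 * A2 - A1 * B1 * B2 + A1 ^ 2 * C2) * b) * h2
    have ha : a = 0 := by
      have := (mul_eq_zero.mp ha3).resolve_left hR
      exact pow_eq_zero_iff (by norm_num) |>.mp this
    have hbz : b = 0 := by
      have := (mul_eq_zero.mp hb3).resolve_left hR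
      exact pow_eq_zero_iff (by norm_num) |>.mp this
    exact hab (by rw [ha, hbz])

/-- **Five points on a parabola and the `2 × 2` determinant `G₂`.**
Let `0, e₁, e₂, α, δ` be five distinct points of `ℝ²`.  Then
`G₂ = g(α,α)g(δ,δ) - g(α,δ)g(δ,α)` vanishes if and only if there is a parabola
through all five points, i.e. some `(a,b) ∈ ℂ² ∖ {0}` such that
`P(x) = a²x₁² + 2abx₁x₂ + b²x₂² - a²x₁ - b²x₂` vanishes at `α` and at `δ`
(it automatically vanishes at `0, e₁, e₂`). -/
theorem g2_vanishes_iff_parabola (α δ : ℝ × ℝ)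
    (hdist : ([((0 : ℝ), (0 : ℝ)), (1, 0), (0, 1), α, δ] : List (ℝ × ℝ)).Pairwise (· ≠ ·)) :
    gKer α α * gKer δ δ - gKer α δ * gKer δ α = 0 ↔
      ∃ a b : ℂ, (a, b) ≠ (0, 0) ∧
        a ^ 2 * (α.1 : ℂ) ^ 2 + 2 * a * b * α.1 * α.2 + b ^ 2 * (α.2 : ℂ) ^ 2
          - a ^ 2 * α.1 - b ^ 2 * α.2 = 0 ∧
        a ^ 2 * (δ.1 : ℂ) ^ 2 + 2 * a * b * δ.1 * δ.2 + b ^ 2 * (δ.2 : ℂ) ^ 2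
          - a ^ 2 * δ.1 - b ^ 2 * δ.2 = 0 := by
  have hg : gKer α α * gKer δ δ - gKer α δ * gKer δ α =
      -(((α.1 ^ 2 - α.1) * (δ.2 ^ 2 - δ.2) - (δ.1 ^ 2 - δ.1) * (α.2 ^ 2 - α.2)) ^ 2
        - ((α.1 ^ 2 - α.1) * (2 * δ.1 * δ.2) - (δ.1 ^ 2 - δ.1) * (2 * α.1 * α.2))
          * ((2 * α.1 * α.2) * (δ.2 ^ 2 - δ.2) - (2 * δ.1 * δ.2) * (α.2 ^ 2 - α.2))) / 4 := by
    unfold gKer; ring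
  rw [hg]
  have hkey := quad_common_root_iff ((α.1 : ℂ) ^ 2 - α.1) (2 * α.1 * α.2)
    ((α.2 : ℂ) ^ 2 - α.2) ((δ.1 : ℂ) ^ 2 - δ.1) (2 * δ.1 * δ.2) ((δ.2 : ℂ) ^ 2 - δ.2)
  constructor
  · intro h
    have hRC : (((α.1 : ℂ) ^ 2 - α.1) * ((δ.2 : ℂ) ^ 2 - δ.2)
          - ((δ.1 : ℂ) ^ 2 - δ.1) * ((α.2 : ℂ) ^ 2 - α.2)) ^ 2
        - (((α.1 : ℂ) ^ 2 - α.1) * (2 * δ.1 * δ.2)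
          - ((δ.1 : ℂ) ^ 2 - δ.1) * (2 * α.1 * α.2))
          * ((2 * α.1 * α.2) * ((δ.2 : ℂ) ^ 2 - δ.2)
          - (2 * δ.1 * δ.2) * ((α.2 : ℂ) ^ 2 - α.2)) = 0 := by
      have hR : ((α.1 ^ 2 - α.1) * (δ.2 ^ 2 - δ.2) - (δ.1 ^ 2 - δ.1) * (α.2 ^ 2 - α.2)) ^ 2
          - ((α.1 ^ 2 - α.1) * (2 * δ.1 * δ.2) - (δ.1 ^ 2 - δ.1) * (2 * α.1 * α.2))
            * ((2 * α.1 * α.2) * (δ.2 ^ 2 - δ.2) - (2 * δ.1 * δ.2) * (α.2 ^ 2 - α.2))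
          = (0 : ℝ) := by linarith
      calc _ = ((((α.1 ^ 2 - α.1) * (δ.2 ^ 2 - δ.2) - (δ.1 ^ 2 - δ.1) * (α.2 ^ 2 - α.2)) ^ 2
          - ((α.1 ^ 2 - α.1) * (2 * δ.1 * δ.2) - (δ.1 ^ 2 - δ.1) * (2 * α.1 * α.2))
            * ((2 * α.1 * α.2) * (δ.2 ^ 2 - δ.2)
              - (2 * δ.1 * δ.2) * (α.2 ^ 2 - α.2)) : ℝ) : ℂ) := by push_cast; ring
        _ = 0 := by rw [hR]; norm_num
    obtain ⟨a, b, hab, h1, h2⟩ := hkey.mp hRC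
    exact ⟨a, b, hab, by linear_combination h1, by linear_combination h2⟩
  · rintro ⟨a, b, hab, h1, h2⟩
    have hRC := hkey.mpr ⟨a, b, hab, by linear_combination h1, by linear_combination h2⟩
    have hR : ((α.1 ^ 2 - α.1) * (δ.2 ^ 2 - δ.2) - (δ.1 ^ 2 - δ.1) * (α.2 ^ 2 - α.2)) ^ 2
        - ((α.1 ^ 2 - α.1) * (2 * δ.1 * δ.2) - (δ.1 ^ 2 - δ.1) * (2 * α.1 * α.2))
          * ((2 * α.1 * α.2) * (δ.2 ^ 2 - δ.2) - (2 * δ.1 * δ.2) * (α.2 ^ 2 - α.2))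
        = (0 : ℝ) := by
      have : ((((α.1 ^ 2 - α.1) * (δ.2 ^ 2 - δ.2) - (δ.1 ^ 2 - δ.1) * (α.2 ^ 2 - α.2)) ^ 2
          - ((α.1 ^ 2 - α.1) * (2 * δ.1 * δ.2) - (δ.1 ^ 2 - δ.1) * (2 * α.1 * α.2))
            * ((2 * α.1 * α.2) * (δ.2 ^ 2 - δ.2)
              - (2 * δ.1 * δ.2) * (α.2 ^ 2 - α.2)) : ℝ) : ℂ) = 0 := by
        push_cast
        linear_combination hRC
      exact_mod_cast this
    rw [hR]; norm_num
end
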